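/- arXiv:1406.7462 — 4 statements merged into one kernel-verified Lean document; each statement's English description precedes it below -/
import Mathlib

section
/- Let x* ∈ ℝ^n satisfy 0 ≤ x* < e entrywise, and let ℓ > 0, b̃ > 0, d ≥ 0, δ ≥ 0 be real numbers such that (1 − 2ℓδ‖x*‖)² − 4ℓ²b̃dδ ≥ 0 and 2ℓδ‖x*‖ + √((1 − 2ℓδ‖x*‖)² − 4ℓ²b̃dδ) > max{ 1 − 2ℓb̃(1 − ‖x*‖), 1 − 2ℓb̃(1 − ‖e − x*‖) }. Set ξ* = (1 − 2ℓδ‖x*‖ − √((1 − 2ℓδ‖x*‖)² − 4ℓ²b̃dδ)) / (2ℓb̃). Then for every Δx ∈ ℝ^n with ‖Δx‖ ≤ ξ*, it holds that 0 < x* + Δx < e entrywise. -/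
noncomputable section

/-- if `0 ≤ x* < e` entrywise, `ℓ > 0`, `b̃ > 0`, `d ≥ 0`, `δ ≥ 0` satisfy
the discriminant condition and the strict lower bound on
`2ℓδ‖x*‖ + √((1 − 2ℓδ‖x*‖)² − 4ℓ²b̃dδ)`, then every `Δx` with `‖Δx‖ ≤ ξ*`
satisfies `0 < x* + Δx < e` entrywise.  (The norm on `Fin n → ℝ` is the sup norm.) -/
theorem stmt1 {n : ℕ} (hn : 1 ≤ n)
    (xs : Fin n → ℝ) (e : Fin n → ℝ) (he : e = fun _ => (1 : ℝ))
    (hx0 : ∀ i, 0 ≤ xs i) (hx1 : ∀ i, xs i < e i)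
    (ℓ bt d δ : ℝ) (hℓ : 0 < ℓ) (hbt : 0 < bt) (hd : 0 ≤ d) (hδ : 0 ≤ δ)
    (hdisc : 0 ≤ (1 - 2 * ℓ * δ * ‖xs‖) ^ 2 - 4 * ℓ ^ 2 * bt * d * δ)
    (hcond : max (1 - 2 * ℓ * bt * (1 - ‖xs‖)) (1 - 2 * ℓ * bt * (1 - ‖e - xs‖)) <
      2 * ℓ * δ * ‖xs‖ +
        Real.sqrt ((1 - 2 * ℓ * δ * ‖xs‖) ^ 2 - 4 * ℓ ^ 2 * bt * d * δ))
    (ξs : ℝ)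
    (hξs : ξs = (1 - 2 * ℓ * δ * ‖xs‖ -
        Real.sqrt ((1 - 2 * ℓ * δ * ‖xs‖) ^ 2 - 4 * ℓ ^ 2 * bt * d * δ)) / (2 * ℓ * bt)) :
    ∀ Δx : Fin n → ℝ, ‖Δx‖ ≤ ξs →
      ∀ i, 0 < xs i + Δx i ∧ xs i + Δx i < e i := by
  intro Δx hΔ i
  rw [max_lt_iff] at hcond
  have h2 : (0:ℝ) < 2 * ℓ * bt := by positivity
  have h1 : ξs < 1 - ‖xs‖ := by
    rw [hξs, div_lt_iff₀ h2]; nlinarith [hcond.1]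
  have h1' : ξs < 1 - ‖e - xs‖ := by
    rw [hξs, div_lt_iff₀ h2]; nlinarith [hcond.2]
  have hxi : xs i ≤ ‖xs‖ := by
    have := norm_le_pi_norm xs i
    rw [Real.norm_eq_abs] at this
    exact (le_abs_self _).trans this
  have hexi : 1 - xs i ≤ ‖e - xs‖ := by
    have := norm_le_pi_norm (e - xs) i
    rw [Real.norm_eq_abs] at this
    have h' : (e - xs) i = 1 - xs i := by simp [he]
    rw [h'] at this
    exact (le_abs_self _).trans this
  have hΔi : |Δx i| ≤ ξs := by
    have := norm_le_pi_norm Δx i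
    rw [Real.norm_eq_abs] at this
    exact this.trans hΔ
  rw [abs_le] at hΔi
  have hei : e i = 1 := by simp [he]
  constructor <;> [skip; rw [hei]] <;> linarith [hΔi.1, hΔi.2]

end
end

section
/- Suppose a ∈ ℝ^n and B ∈ ℝ^{n×n²} satisfy e = a + B(e ⊗ e), x* ∈ ℝ^n satisfies x* = a + B(x* ⊗ x*) with 0 ≤ x* < e entrywise, and L = I − B(x* ⊗ I + I ⊗ x*) is invertible. Let ã ∈ ℝ^n and B̃ ∈ ℝ^{n×n²} satisfy e = ã + B̃(e ⊗ e), and set ΔB = B̃ − B, δ = ‖ΔB‖, ℓ = ‖L⁻¹‖, b̃ = ‖B̃‖, d = ‖x* ⊗ x* − e ⊗ e‖. If ‖x*‖·δ + √(b̃·d·δ) ≤ 1/(2ℓ) and 2ℓδ‖x*‖ + √((1 − 2ℓδ‖x*‖)² − 4ℓ²b̃dδ) > max{ 1 − 2ℓb̃(1 − ‖x*‖), 1 − 2ℓb̃(1 − ‖e − x*‖) }, then there exists x̃ ∈ ℝ^n with x̃ = ã + B̃(x̃ ⊗ x̃), 0 < x̃ < e entrywise, and ‖x̃ − x*‖ ≤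 ξ*, where ξ* = 2ℓdδ / (1 − 2ℓδ‖x*‖ + √((1 − 2ℓδ‖x*‖)² − 4ℓ²b̃dδ)). -/
/-!
Write the perturbed solution as `x̃ = x* + h`. Subtracting the consistency conditions and the
equation for `x*`, the perturbed QVE becomes the fixed-point equation `h = F h` with
`F h = L⁻¹ (ΔB (x*⊗x* − e⊗e + x*⊗h + h⊗x*) + B̃ (h⊗h))`. Since `‖F 0‖ ≤ ℓδd` and
`‖F v − F w‖ ≤ (2ℓδ‖x*‖ + ℓb̃ (‖v‖ + ‖w‖)) ‖v − w‖`, the scalar iteration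
`t ↦ ℓδd + 2ℓδ‖x*‖ t + ℓb̃ t²` from `0` majorizes the Picard iteration of `F` from `0`
(Kantorovich). By the first condition it increases to the smaller root `ξ*` of
`ℓb̃ t² − (1 − 2ℓδ‖x*‖) t + ℓδd`, so `F` has a fixed point with `‖h‖ ≤ ξ*`. The second
condition says exactly `ξ* < 1 − ‖x*‖` and `ξ* < 1 − ‖e − x*‖`, which keeps `x̃` strictly
between `0` and `e`.
-/

open Matrix

noncomputable section

/-- Decode an index `p ∈ Fin (n*n)` (row-major: `p = n*i + j`) into the pair `(i, j)`. -/
def kronDecode {n : ℕ} (p : Fin (n * n)) : Fin n × Fin n :=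
  ⟨⟨(p : ℕ) / n, Nat.div_lt_of_lt_mul p.isLt⟩,
   ⟨(p : ℕ) % n, Nat.mod_lt _ (by
      rcases Nat.eq_zero_or_pos n with h | h
      · exact absurd p.isLt (by simp [h])
      · exact h)⟩⟩

/-- Kronecker product of two vectors in `ℝ^n`, as a vector in `ℝ^(n²)`:
`(u ⊗ v)_{n(i-1)+j} = u_i v_j` (row-major). -/
def kron {n : ℕ} (u v : Fin n → ℝ) : Fin (n * n) → ℝ :=
  fun p => u (kronDecode p).1 * v (kronDecode p).2

/-- `u ⊗ I`: entry `u_i · δ_{jk}` at row `(i,j)`, column `k`. -/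
def kronVecId {n : ℕ} (u : Fin n → ℝ) : Matrix (Fin (n * n)) (Fin n) ℝ :=
  fun p k => u (kronDecode p).1 * (if (kronDecode p).2 = k then (1 : ℝ) else 0)

/-- `I ⊗ u`: entry `δ_{ik} · u_j` at row `(i,j)`, column `k`. -/
def kronIdVec {n : ℕ} (u : Fin n → ℝ) : Matrix (Fin (n * n)) (Fin n) ℝ :=
  fun p k => (if (kronDecode p).1 = k then (1 : ℝ) else 0) * u (kronDecode p).2

/-- The operator norm induced by the sup norm `‖·‖` on `Fin k → ℝ` and `Fin m → ℝ`. -/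
def matNorm {m k : ℕ} (M : Matrix (Fin m) (Fin k) ℝ) : ℝ :=
  ⨆ i, ∑ j, |M i j|

open Filter

section QuadraticMajorant

variable {E : Type*} [NormedAddCommGroup E] {F : E → E} {β γ : ℝ}

theorem continuous_of_norm_sub_le_quadratic
    (hF : ∀ v w, ‖F v - F w‖ ≤ (β + γ * (‖v‖ + ‖w‖)) * ‖v - w‖) : Continuous F := by
  refine continuous_iff_continuousAt.2 fun w => ?_
  rw [ContinuousAt, tendsto_iff_norm_sub_tendsto_zero]
  refine squeeze_zero (fun _ => norm_nonneg _) (fun v => hF v w) ?_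
  have hcont : Continuous fun v : E => (β + γ * (‖v‖ + ‖w‖)) * ‖v - w‖ := by fun_prop
  simpa using hcont.tendsto w

theorem quadratic_recurrence_bounds {α ξ : ℝ} (hα : 0 ≤ α) (hβ : 0 ≤ β) (hγ : 0 ≤ γ) (hξ : 0 ≤ ξ)
    (hξfix : α + β * ξ + γ * ξ ^ 2 ≤ ξ) {t : ℕ → ℝ} (ht_zero : t 0 = 0)
    (ht_succ : ∀ k, t (k + 1) = α + β * t k + γ * t k ^ 2) (k : ℕ) :
    0 ≤ t k ∧ t k ≤ t (k + 1) ∧ t k ≤ ξ := by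
  have hmono : ∀ s s', 0 ≤ s → s ≤ s' → α + β * s + γ * s ^ 2 ≤ α + β * s' + γ * s' ^ 2 :=
    fun s s' hs hss' => by gcongr
  induction k with
  | zero => simp [ht_succ, ht_zero, hα, hξ]
  | succ k ih =>
    obtain ⟨h0, hle_succ, hle⟩ := ih
    refine ⟨h0.trans hle_succ, ?_, ?_⟩
    · simpa only [ht_succ] using hmono _ _ h0 hle_succ
    · rw [ht_succ k]
      exact (hmono _ _ h0 hle).trans hξfix

theorem exists_fixedPoint_of_quadratic_majorant [CompleteSpace E] {α ξ : ℝ} (hβ : 0 ≤ β)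
    (hγ : 0 ≤ γ) (hξ : 0 ≤ ξ) (hF0 : ‖F 0‖ ≤ α)
    (hF : ∀ v w, ‖F v - F w‖ ≤ (β + γ * (‖v‖ + ‖w‖)) * ‖v - w‖)
    (hξfix : α + β * ξ + γ * ξ ^ 2 ≤ ξ) :
    ∃ x, F x = x ∧ ‖x‖ ≤ ξ := by
  obtain ⟨t, ht_zero, ht_succ⟩ : ∃ t : ℕ → ℝ, t 0 = 0 ∧
      ∀ k, t (k + 1) = α + β * t k + γ * t k ^ 2 :=
    ⟨fun k => (fun s => α + β * s + γ * s ^ 2)^[k] 0, rfl,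
      fun k => Function.iterate_succ_apply' _ _ _⟩
  obtain ⟨x, hx_zero, hx_succ⟩ : ∃ x : ℕ → E, x 0 = 0 ∧ ∀ k, x (k + 1) = F (x k) :=
    ⟨fun k => F^[k] 0, rfl, fun k => Function.iterate_succ_apply' _ _ _⟩
  have ht := quadratic_recurrence_bounds ((norm_nonneg _).trans hF0) hβ hγ hξ hξfix ht_zero ht_succ
  have hx : ∀ k, ‖x k‖ ≤ t k ∧ ‖x (k + 1) - x k‖ ≤ t (k + 1) - t k := by
    intro k
    induction k with
    | zero => simpa [hx_succ, hx_zero, ht_succ, ht_zero] using hF0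
    | succ k ih =>
      obtain ⟨hnorm, hstep⟩ := ih
      have hnorm' : ‖x (k + 1)‖ ≤ t (k + 1) := by
        linarith [norm_le_norm_sub_add (x (k + 1)) (x k)]
      refine ⟨hnorm', ?_⟩
      calc ‖x (k + 2) - x (k + 1)‖ = ‖F (x (k + 1)) - F (x k)‖ := by
            rw [hx_succ (k + 1), hx_succ k]
        _ ≤ (β + γ * (‖x (k + 1)‖ + ‖x k‖)) * ‖x (k + 1) - x k‖ := hF _ _
        _ ≤ (β + γ * (t (k + 1) + t k)) * (t (k + 1) - t k) := by
          gcongr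
          exact add_nonneg hβ (mul_nonneg hγ (add_nonneg (ht _).1 (ht _).1))
        _ = t (k + 2) - t (k + 1) := by rw [ht_succ (k + 1), ht_succ k]; ring
  have hsummable : Summable fun k => t (k + 1) - t k := by
    refine summable_of_sum_range_le (c := ξ) (fun k => sub_nonneg.2 (ht k).2.1) fun k => ?_
    rw [Finset.sum_range_sub, ht_zero, sub_zero]
    exact (ht k).2.2
  obtain ⟨x₀, hlim⟩ := cauchySeq_tendsto_of_complete <|
    cauchySeq_of_dist_le_of_summable (f := x) _
      (fun k => by rw [dist_comm, dist_eq_norm]; exact (hx k).2) hsummable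
  have hFlim := (continuous_of_norm_sub_le_quadratic hF).tendsto x₀ |>.comp hlim
  refine ⟨x₀, tendsto_nhds_unique hFlim ?_,
    le_of_tendsto' hlim.norm fun k => (hx k).1.trans (ht k).2.2⟩
  simpa only [Function.comp_def, hx_succ] using (tendsto_add_atTop_iff_nat 1).2 hlim

end QuadraticMajorant

theorem quadratic_root_div_add_sqrt {p q γ c ξ : ℝ} (hγ : 0 < γ) (hc : 0 ≤ c) (hq : q ≤ c ^ 2)
    (hpq : 2 * γ * p = q) (hξ : ξ = p / (c + √(c ^ 2 - q))) :
    ξ * (c + √(c ^ 2 - q)) = p ∧ 2 * γ * ξ = c - √(c ^ 2 - q) := by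
  set s := √(c ^ 2 - q)
  have hs : 0 ≤ s := Real.sqrt_nonneg _
  have hs_sq : s ^ 2 = c ^ 2 - q := Real.sq_sqrt (sub_nonneg.2 hq)
  rcases (add_nonneg hc hs).eq_or_lt with hcs | hcs
  · -- `c = s = 0` forces `q = 0`, hence `p = 0`, and `ξ = p / 0 = 0`
    have hc0 : c = 0 := by linarith
    have hs0 : s = 0 := by linarith
    have hp : p = 0 := by
      have : 2 * γ * p = 0 := by rw [hpq]; nlinarith
      simpa [hγ.ne'] using this
    simp [hξ, hc0, hs0, hp]
  · have hξ_mul : ξ * (c + s) = p := by rw [hξ]; exact div_mul_cancel₀ _ hcs.ne'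
    refine ⟨hξ_mul, mul_right_cancel₀ hcs.ne' ?_⟩
    linear_combination 2 * γ * hξ_mul + hpq + hs_sq

theorem perturbationRadius_spec {ℓ δ bt d x y ξ : ℝ} (hℓ : 0 ≤ ℓ) (hbt : 0 ≤ bt) (hδ : 0 ≤ δ)
    (hd : 0 ≤ d) (hcond1 : x * δ + √(bt * d * δ) ≤ 1 / (2 * ℓ))
    (hcond2 : max (1 - 2 * ℓ * bt * (1 - x)) (1 - 2 * ℓ * bt * (1 - y)) <
      2 * ℓ * δ * x + √((1 - 2 * ℓ * δ * x) ^ 2 - 4 * ℓ ^ 2 * bt * d * δ))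
    (hξ : ξ = 2 * ℓ * d * δ /
      (1 - 2 * ℓ * δ * x + √((1 - 2 * ℓ * δ * x) ^ 2 - 4 * ℓ ^ 2 * bt * d * δ))) :
    0 ≤ ξ ∧ ℓ * (δ * d) + 2 * ℓ * δ * x * ξ + ℓ * bt * ξ ^ 2 = ξ ∧ ξ < 1 - x ∧ ξ < 1 - y := by
  have hℓ0 : 0 < ℓ := by
    refine hℓ.lt_of_ne' fun h => ?_
    simp [h] at hcond2
  set c := 1 - 2 * ℓ * δ * x
  have hc : 2 * ℓ * √(bt * d * δ) ≤ c := by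
    rw [le_div_iff₀ (by positivity)] at hcond1
    linarith
  have hc0 : 0 ≤ c := le_trans (by positivity) hc
  have hbt0 : 0 < bt := by
    refine hbt.lt_of_ne' fun h => ?_
    have := (le_max_left _ _).trans_lt hcond2
    simp [h, Real.sqrt_sq hc0, c] at this
  have hdisc : 4 * ℓ ^ 2 * bt * d * δ ≤ c ^ 2 := by
    have := pow_le_pow_left₀ (by positivity) hc 2
    rw [mul_pow, Real.sq_sqrt (by positivity)] at this
    linear_combination this
  obtain ⟨hξ_mul, hξ_sub⟩ :=
    quadratic_root_div_add_sqrt (γ := ℓ * bt) (mul_pos hℓ0 hbt0) hc0 hdisc (by ring) hξ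
  set s := √(c ^ 2 - 4 * ℓ ^ 2 * bt * d * δ)
  have hξ_lt : ∀ r, 1 - 2 * ℓ * bt * (1 - r) < 2 * ℓ * δ * x + s → ξ < 1 - r := fun r hr =>
    lt_of_mul_lt_mul_left (a := 2 * ℓ * bt) (by linarith) (by positivity)
  refine ⟨?_, ?_, hξ_lt _ ((le_max_left _ _).trans_lt hcond2),
    hξ_lt _ ((le_max_right _ _).trans_lt hcond2)⟩
  · rw [hξ]
    exact div_nonneg (by positivity) (add_nonneg hc0 (Real.sqrt_nonneg _))
  · linear_combination (ξ / 2) * hξ_sub - (1 / 2) * hξ_mul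

theorem pos_lt_one_of_norm_lt {ι : Type*} [Fintype ι] {x h : ι → ℝ} (hx : ‖h‖ < 1 - ‖x‖)
    (hx' : ‖h‖ < 1 - ‖1 - x‖) (i : ι) : 0 < (x + h) i ∧ (x + h) i < 1 := by
  have hhi := abs_le.1 (norm_le_pi_norm h i)
  have hxi := abs_le.1 (norm_le_pi_norm x i)
  have hxi' := abs_le.1 (norm_le_pi_norm (1 - x) i)
  simp only [Pi.sub_apply, Pi.one_apply] at hxi'
  simp only [Pi.add_apply]
  constructor <;> linarith [hhi.1, hhi.2, hxi.2, hxi'.2]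

attribute [local instance] Matrix.linftyOpNormedAddCommGroup

theorem matNorm_eq_norm {m k : ℕ} (M : Matrix (Fin m) (Fin k) ℝ) : matNorm M = ‖M‖ := by
  have hrow : ∀ i, ∑ j, |M i j| = ((∑ j, ‖M i j‖₊ : NNReal) : ℝ) := fun i => by push_cast; rfl
  have hnonneg : 0 ≤ matNorm M :=
    Real.iSup_nonneg fun i => Finset.sum_nonneg fun j _ => abs_nonneg _
  apply le_antisymm
  · refine Real.iSup_le (fun i => ?_) (norm_nonneg _)
    rw [linfty_opNorm_def, hrow, NNReal.coe_le_coe]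
    exact Finset.le_sup (f := fun i => ∑ j, ‖M i j‖₊) (Finset.mem_univ i)
  · rw [linfty_opNorm_def, ← Real.le_toNNReal_iff_coe_le hnonneg]
    refine Finset.sup_le fun i _ => (Real.le_toNNReal_iff_coe_le hnonneg).2 ?_
    rw [← hrow]
    exact le_ciSup (f := fun i => ∑ j, |M i j|) (Set.finite_range _).bddAbove i

section Kron

variable {n : ℕ}

theorem norm_kron_le (u v : Fin n → ℝ) : ‖kron u v‖ ≤ ‖u‖ * ‖v‖ := by
  refine (pi_norm_le_iff_of_nonneg (by positivity)).2 fun p => ?_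
  rw [kron, norm_mul]
  exact mul_le_mul (norm_le_pi_norm u _) (norm_le_pi_norm v _) (norm_nonneg _) (norm_nonneg _)

@[simp] theorem kron_zero_left (v : Fin n → ℝ) : kron 0 v = 0 := by
  funext p; simp [kron]

@[simp] theorem kron_zero_right (u : Fin n → ℝ) : kron u 0 = 0 := by
  funext p; simp [kron]

theorem kron_add_left (u w v : Fin n → ℝ) : kron (u + w) v = kron u v + kron w v := by
  funext p; simp [kron, add_mul]

theorem kron_add_right (u v w : Fin n → ℝ) : kron u (v + w) = kron u v + kron u w := by
  funext p; simp [kron, mul_add]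

theorem kron_sub_left (u w v : Fin n → ℝ) : kron (u - w) v = kron u v - kron w v := by
  funext p; simp [kron, sub_mul]

theorem kron_sub_right (u v w : Fin n → ℝ) : kron u (v - w) = kron u v - kron u w := by
  funext p; simp [kron, mul_sub]

theorem kronVecId_mulVec (u v : Fin n → ℝ) : kronVecId u *ᵥ v = kron u v := by
  funext p
  simp [mulVec, dotProduct, kronVecId, kron, mul_comm]

theorem kronIdVec_mulVec (u v : Fin n → ℝ) : kronIdVec u *ᵥ v = kron v u := by
  funext p
  simp [mulVec, dotProduct, kronIdVec, kron, mul_comm]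

def qvePerturbationMap (M : Matrix (Fin n) (Fin n) ℝ) (ΔB Bt : Matrix (Fin n) (Fin (n * n)) ℝ)
    (xs e h : Fin n → ℝ) : Fin n → ℝ :=
  M *ᵥ (ΔB *ᵥ (kron xs xs - kron e e + kron xs h + kron h xs) + Bt *ᵥ kron h h)

section qvePerturbationMap

variable (M : Matrix (Fin n) (Fin n) ℝ) (ΔB Bt : Matrix (Fin n) (Fin (n * n)) ℝ) (xs e : Fin n → ℝ)

theorem norm_qvePerturbationMap_zero_le :
    ‖qvePerturbationMap M ΔB Bt xs e 0‖ ≤ ‖M‖ * (‖ΔB‖ * ‖kron xs xs - kron e e‖) := by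
  simp only [qvePerturbationMap, kron_zero_left, kron_zero_right, add_zero, mulVec_zero]
  exact (linfty_opNorm_mulVec _ _).trans (by gcongr; exact linfty_opNorm_mulVec _ _)

theorem qvePerturbationMap_sub (v w : Fin n → ℝ) :
    qvePerturbationMap M ΔB Bt xs e v - qvePerturbationMap M ΔB Bt xs e w =
      M *ᵥ (ΔB *ᵥ (kron xs (v - w) + kron (v - w) xs) +
        Bt *ᵥ (kron v (v - w) + kron (v - w) w)) := by
  simp only [qvePerturbationMap, kron_sub_left, kron_sub_right, mulVec_add,
    mulVec_sub]
  abel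

theorem norm_qvePerturbationMap_sub_le (v w : Fin n → ℝ) :
    ‖qvePerturbationMap M ΔB Bt xs e v - qvePerturbationMap M ΔB Bt xs e w‖ ≤
      (2 * ‖M‖ * ‖ΔB‖ * ‖xs‖ + ‖M‖ * ‖Bt‖ * (‖v‖ + ‖w‖)) * ‖v - w‖ := by
  have hkron : ∀ u₁ v₁ u₂ v₂ : Fin n → ℝ,
      ‖kron u₁ v₁ + kron u₂ v₂‖ ≤ ‖u₁‖ * ‖v₁‖ + ‖u₂‖ * ‖v₂‖ := fun u₁ v₁ u₂ v₂ =>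
    (norm_add_le _ _).trans (add_le_add (norm_kron_le _ _) (norm_kron_le _ _))
  rw [qvePerturbationMap_sub]
  calc _ ≤ ‖M‖ * (‖ΔB‖ * ‖kron xs (v - w) + kron (v - w) xs‖ +
        ‖Bt‖ * ‖kron v (v - w) + kron (v - w) w‖) := by
        refine (linfty_opNorm_mulVec _ _).trans ?_
        gcongr
        exact (norm_add_le _ _).trans
          (add_le_add (linfty_opNorm_mulVec _ _) (linfty_opNorm_mulVec _ _))
    _ ≤ ‖M‖ * (‖ΔB‖ * (‖xs‖ * ‖v - w‖ + ‖v - w‖ * ‖xs‖) +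
        ‖Bt‖ * (‖v‖ * ‖v - w‖ + ‖v - w‖ * ‖w‖)) := by gcongr <;> exact hkron _ _ _ _
    _ = _ := by ring

theorem add_solves_of_qvePerturbationMap_eq {a at_ : Fin n → ℝ}
    {B : Matrix (Fin n) (Fin (n * n)) ℝ} {L : Matrix (Fin n) (Fin n) ℝ} {h : Fin n → ℝ}
    (heq : e = a + B *ᵥ kron e e) (hxs : xs = a + B *ᵥ kron xs xs)
    (hL : L = 1 - B * (kronVecId xs + kronIdVec xs)) (hLinv : IsUnit L)
    (heqt : e = at_ + Bt *ᵥ kron e e) (hΔB : ΔB = Bt - B)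
    (hfix : qvePerturbationMap L⁻¹ ΔB Bt xs e h = h) :
    xs + h = at_ + Bt *ᵥ kron (xs + h) (xs + h) := by
  have hLh : L *ᵥ h = h - B *ᵥ (kron xs h + kron h xs) := by
    rw [hL, sub_mulVec, one_mulVec, ← mulVec_mulVec, add_mulVec, kronVecId_mulVec,
      kronIdVec_mulVec]
  have hLfix :
      L *ᵥ h = ΔB *ᵥ (kron xs xs - kron e e + kron xs h + kron h xs) + Bt *ᵥ kron h h := by
    conv_lhs => rw [← hfix]
    rw [qvePerturbationMap, mulVec_mulVec, mul_nonsing_inv _ ((isUnit_iff_isUnit_det L).1 hLinv),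
      one_mulVec]
  subst hΔB
  simp only [kron_add_left, kron_add_right, sub_mulVec, mulVec_add, mulVec_sub] at hLh hLfix ⊢
  linear_combination (norm := module) hxs - heq + heqt - hLh + hLfix

end qvePerturbationMap

end Kron

theorem stmt2_general {n : ℕ}
    (a : Fin n → ℝ) (B : Matrix (Fin n) (Fin (n * n)) ℝ)
    (xs : Fin n → ℝ)
    (at_ : Fin n → ℝ) (Bt : Matrix (Fin n) (Fin (n * n)) ℝ)
    (e : Fin n → ℝ) (he : e = fun _ => (1 : ℝ))
    (heq : e = a + B *ᵥ kron e e)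
    (hxs : xs = a + B *ᵥ kron xs xs)
    (L : Matrix (Fin n) (Fin n) ℝ)
    (hL : L = 1 - B * (kronVecId xs + kronIdVec xs))
    (hLinv : IsUnit L)
    (heqt : e = at_ + Bt *ᵥ kron e e)
    (ΔB : Matrix (Fin n) (Fin (n * n)) ℝ) (hΔB : ΔB = Bt - B)
    (δ ℓ bt d : ℝ)
    (hδ : δ = matNorm ΔB) (hℓ : ℓ = matNorm L⁻¹) (hbt : bt = matNorm Bt)
    (hd : d = ‖kron xs xs - kron e e‖)
    (hcond1 : ‖xs‖ * δ + Real.sqrt (bt * d * δ) ≤ 1 / (2 * ℓ))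
    (hcond2 : max (1 - 2 * ℓ * bt * (1 - ‖xs‖)) (1 - 2 * ℓ * bt * (1 - ‖e - xs‖)) <
      2 * ℓ * δ * ‖xs‖ +
        Real.sqrt ((1 - 2 * ℓ * δ * ‖xs‖) ^ 2 - 4 * ℓ ^ 2 * bt * d * δ)) :
    ∃ xt : Fin n → ℝ, xt = at_ + Bt *ᵥ kron xt xt ∧
      (∀ i, 0 < xt i ∧ xt i < e i) ∧
      ‖xt - xs‖ ≤ 2 * ℓ * d * δ /
        (1 - 2 * ℓ * δ * ‖xs‖ +
          Real.sqrt ((1 - 2 * ℓ * δ * ‖xs‖) ^ 2 - 4 * ℓ ^ 2 * bt * d * δ)) := by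
  rw [matNorm_eq_norm] at hδ hℓ hbt
  have hℓ0 : 0 ≤ ℓ := hℓ ▸ norm_nonneg _
  have hbt0 : 0 ≤ bt := hbt ▸ norm_nonneg _
  have hδ0 : 0 ≤ δ := hδ ▸ norm_nonneg _
  obtain ⟨hξ0, hξfix, hξ_xs, hξ_e⟩ :=
    perturbationRadius_spec hℓ0 hbt0 hδ0 (hd ▸ norm_nonneg _) hcond1 hcond2 rfl
  obtain ⟨h, hfix, hh⟩ := exists_fixedPoint_of_quadratic_majorant
    (F := qvePerturbationMap L⁻¹ ΔB Bt xs e) (by positivity) (by positivity) hξ0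
    (by rw [hℓ, hδ, hd]; exact norm_qvePerturbationMap_zero_le _ _ _ _ _)
    (fun v w => by
      rw [hℓ, hδ, hbt]; exact (norm_qvePerturbationMap_sub_le _ _ _ _ _ _ _).trans_eq (by ring))
    hξfix.le
  subst he
  refine ⟨xs + h, add_solves_of_qvePerturbationMap_eq _ _ _ _ heq hxs hL hLinv heqt hΔB hfix,
    pos_lt_one_of_norm_lt (hh.trans_lt hξ_xs) (hh.trans_lt hξ_e), by simpa using hh⟩

/-- Theorem 2.5 of the paper, existence form: under the consistency
conditions for the original and perturbed QVEs, with `0 ≤ x* < e` entrywise and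
`L = I − B(x*⊗I + I⊗x*)` invertible, if `‖x*‖δ + √(b̃dδ) ≤ 1/(2ℓ)` and
`2ℓδ‖x*‖ + √((1 − 2ℓδ‖x*‖)² − 4ℓ²b̃dδ) > max{1 − 2ℓb̃(1 − ‖x*‖), 1 − 2ℓb̃(1 − ‖e − x*‖)}`,
then the perturbed QVE has a solution `x̃` with `0 < x̃ < e` entrywise and
`‖x̃ − x*‖ ≤ ξ*`. -/
theorem stmt2 {n : ℕ} (hn : 1 ≤ n)
    (a : Fin n → ℝ) (B : Matrix (Fin n) (Fin (n * n)) ℝ)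
    (xs : Fin n → ℝ)
    (at_ : Fin n → ℝ) (Bt : Matrix (Fin n) (Fin (n * n)) ℝ)
    (e : Fin n → ℝ) (he : e = fun _ => (1 : ℝ))
    (heq : e = a + B *ᵥ kron e e)
    (hxs : xs = a + B *ᵥ kron xs xs)
    (hxs0 : ∀ i, 0 ≤ xs i) (hxs1 : ∀ i, xs i < e i)
    (L : Matrix (Fin n) (Fin n) ℝ)
    (hL : L = 1 - B * (kronVecId xs + kronIdVec xs))
    (hLinv : IsUnit L)
    (heqt : e = at_ + Bt *ᵥ kron e e)
    (ΔB : Matrix (Fin n) (Fin (n * n)) ℝ) (hΔB : ΔB = Bt - B)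
    (δ ℓ bt d : ℝ)
    (hδ : δ = matNorm ΔB) (hℓ : ℓ = matNorm L⁻¹) (hbt : bt = matNorm Bt)
    (hd : d = ‖kron xs xs - kron e e‖)
    (hcond1 : ‖xs‖ * δ + Real.sqrt (bt * d * δ) ≤ 1 / (2 * ℓ))
    (hcond2 : max (1 - 2 * ℓ * bt * (1 - ‖xs‖)) (1 - 2 * ℓ * bt * (1 - ‖e - xs‖)) <
      2 * ℓ * δ * ‖xs‖ +
        Real.sqrt ((1 - 2 * ℓ * δ * ‖xs‖) ^ 2 - 4 * ℓ ^ 2 * bt * d * δ)) :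
    ∃ xt : Fin n → ℝ, xt = at_ + Bt *ᵥ kron xt xt ∧
      (∀ i, 0 < xt i ∧ xt i < e i) ∧
      ‖xt - xs‖ ≤ 2 * ℓ * d * δ /
        (1 - 2 * ℓ * δ * ‖xs‖ +
          Real.sqrt ((1 - 2 * ℓ * δ * ‖xs‖) ^ 2 - 4 * ℓ ^ 2 * bt * d * δ)) :=
  stmt2_general a B xs at_ Bt e he heq hxs L hL hLinv heqt ΔB hΔB δ ℓ bt d hδ hℓ hbt hd hcond1
    hcond2

end
end

section
/- Suppose a ∈ ℝ^n and B ∈ ℝ^{n×n²} satisfy e = a + B(e ⊗ e), x* ∈ ℝ^n satisfies x* = a + B(x* ⊗ x*), and L = I − B(x* ⊗ I + I ⊗ x*) is invertible. Let ã ∈ ℝ^n and B̃ ∈ ℝ^{n×n²} satisfy e = ã + B̃(e ⊗ e), set ΔB = B̃ − B, and define, for Δx ∈ ℝ^n, φ(Δx) = B(Δx ⊗ Δx) + ΔB(Δx ⊗ x* + x* ⊗ Δx) + ΔB(Δx ⊗ Δx) and μ(Δx) = L⁻¹(ΔB(x* ⊗ x* − e ⊗ e) + φ(Δx)). Then with δ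 = ‖ΔB‖, ℓ = ‖L⁻¹‖, b̃ = ‖B + ΔB‖, d = ‖x* ⊗ x* − e ⊗ e‖, one has ‖μ(Δx)‖ ≤ ℓdδ + 2ℓδ‖x*‖·‖Δx‖ + ℓb̃·‖Δx‖² for every Δx ∈ ℝ^n; consequently, if ξ ≥ 0 satisfies ℓb̃ξ² + (2ℓδ‖x*‖ − 1)ξ + ℓdδ = 0, then ‖Δx‖ ≤ ξ implies ‖μ(Δx)‖ ≤ ξ. -/
open Matrix

noncomputable section

lemma matNorm_nonneg' {m k : ℕ} (hm : 0 < m) (M : Matrix (Fin m) (Fin k) ℝ) :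
    0 ≤ matNorm M := by
  haveI : Nonempty (Fin m) := ⟨⟨0, hm⟩⟩
  refine le_ciSup_of_le (Set.Finite.bddAbove (Set.finite_range _)) (Classical.arbitrary _) ?_
  exact Finset.sum_nonneg fun j _ => abs_nonneg _

lemma mulVec_norm_le' {m k : ℕ} (hm : 0 < m) (M : Matrix (Fin m) (Fin k) ℝ)
    (v : Fin k → ℝ) : ‖M *ᵥ v‖ ≤ matNorm M * ‖v‖ := by
  haveI : Nonempty (Fin m) := ⟨⟨0, hm⟩⟩
  rw [pi_norm_le_iff_of_nonneg (mul_nonneg (matNorm_nonneg' hm M) (norm_nonneg _))]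
  intro i
  calc ‖(M *ᵥ v) i‖ = |∑ j, M i j * v j| := rfl
    _ ≤ ∑ j, |M i j * v j| := Finset.abs_sum_le_sum_abs _ _
    _ ≤ ∑ j, |M i j| * ‖v‖ := by
        refine Finset.sum_le_sum fun j _ => ?_
        rw [abs_mul]
        exact mul_le_mul_of_nonneg_left ((Real.norm_eq_abs (v j)) ▸ norm_le_pi_norm v j)
          (abs_nonneg _)
    _ = (∑ j, |M i j|) * ‖v‖ := (Finset.sum_mul _ _ _).symm
    _ ≤ matNorm M * ‖v‖ := mul_le_mul_of_nonneg_right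
        (le_ciSup (f := fun i => ∑ j, |M i j|) (Set.Finite.bddAbove (Set.finite_range _)) i) (norm_nonneg _)

lemma kron_norm_le' {n : ℕ} (u v : Fin n → ℝ) : ‖kron u v‖ ≤ ‖u‖ * ‖v‖ := by
  rw [pi_norm_le_iff_of_nonneg (mul_nonneg (norm_nonneg _) (norm_nonneg _))]
  intro p
  calc ‖kron u v p‖ = |u (kronDecode p).1| * |v (kronDecode p).2| := by
        simp [kron, Real.norm_eq_abs, abs_mul]
    _ ≤ ‖u‖ * ‖v‖ := mul_le_mul
        ((Real.norm_eq_abs _) ▸ norm_le_pi_norm u _)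
        ((Real.norm_eq_abs _) ▸ norm_le_pi_norm v _)
        (abs_nonneg _) (norm_nonneg _)

/-- with `φ(Δx) = B(Δx⊗Δx) + ΔB(Δx⊗x* + x*⊗Δx) + ΔB(Δx⊗Δx)` and
`μ(Δx) = L⁻¹(ΔB(x*⊗x* − e⊗e) + φ(Δx))`, one has
`‖μ(Δx)‖ ≤ ℓdδ + 2ℓδ‖x*‖‖Δx‖ + ℓb̃‖Δx‖²` for every `Δx`; consequently, if `ξ ≥ 0`
satisfies `ℓb̃ξ² + (2ℓδ‖x*‖ − 1)ξ + ℓdδ = 0`, then `‖Δx‖ ≤ ξ` implies `‖μ(Δx)‖ ≤ ξ`. -/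
theorem stmt6 {n : ℕ} (hn : 1 ≤ n)
    (a : Fin n → ℝ) (B : Matrix (Fin n) (Fin (n * n)) ℝ)
    (xs : Fin n → ℝ)
    (at_ : Fin n → ℝ) (Bt : Matrix (Fin n) (Fin (n * n)) ℝ)
    (e : Fin n → ℝ) (he : e = fun _ => (1 : ℝ))
    (heq : e = a + B *ᵥ kron e e)
    (hxs : xs = a + B *ᵥ kron xs xs)
    (L : Matrix (Fin n) (Fin n) ℝ)
    (hL : L = 1 - B * (kronVecId xs + kronIdVec xs))
    (hLinv : IsUnit L)
    (heqt : e = at_ + Bt *ᵥ kron e e)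
    (ΔB : Matrix (Fin n) (Fin (n * n)) ℝ) (hΔB : ΔB = Bt - B)
    (φ μ : (Fin n → ℝ) → (Fin n → ℝ))
    (hφ : ∀ Δx, φ Δx = B *ᵥ kron Δx Δx + ΔB *ᵥ (kron Δx xs + kron xs Δx)
      + ΔB *ᵥ kron Δx Δx)
    (hμ : ∀ Δx, μ Δx = L⁻¹ *ᵥ (ΔB *ᵥ (kron xs xs - kron e e) + φ Δx))
    (δ ℓ bt d : ℝ)
    (hδ : δ = matNorm ΔB) (hℓ : ℓ = matNorm L⁻¹) (hbt : bt = matNorm (B + ΔB))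
    (hd : d = ‖kron xs xs - kron e e‖) :
    (∀ Δx : Fin n → ℝ,
      ‖μ Δx‖ ≤ ℓ * d * δ + 2 * ℓ * δ * ‖xs‖ * ‖Δx‖ + ℓ * bt * ‖Δx‖ ^ 2) ∧
    (∀ ξ : ℝ, 0 ≤ ξ →
      ℓ * bt * ξ ^ 2 + (2 * ℓ * δ * ‖xs‖ - 1) * ξ + ℓ * d * δ = 0 →
      ∀ Δx : Fin n → ℝ, ‖Δx‖ ≤ ξ → ‖μ Δx‖ ≤ ξ) := by
  have hn0 : 0 < n := hn
  have hℓ0 : 0 ≤ ℓ := hℓ ▸ matNorm_nonneg' hn0 _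
  have hδ0 : 0 ≤ δ := hδ ▸ matNorm_nonneg' hn0 _
  have hbt0 : 0 ≤ bt := hbt ▸ matNorm_nonneg' hn0 _
  have hd0 : 0 ≤ d := hd ▸ norm_nonneg _
  have main : ∀ Δx : Fin n → ℝ,
      ‖μ Δx‖ ≤ ℓ * d * δ + 2 * ℓ * δ * ‖xs‖ * ‖Δx‖ + ℓ * bt * ‖Δx‖ ^ 2 := by
    intro Δx
    set r := ‖Δx‖ with hr
    have hφ' : φ Δx = (B + ΔB) *ᵥ kron Δx Δx + ΔB *ᵥ (kron Δx xs + kron xs Δx) := by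
      rw [hφ, add_mulVec]; abel
    have h3 : ‖ΔB *ᵥ (kron xs xs - kron e e)‖ ≤ δ * d := by
      rw [hδ, hd]; exact mulVec_norm_le' hn0 _ _
    have h4a : ‖(B + ΔB) *ᵥ kron Δx Δx‖ ≤ bt * (r * r) := by
      calc ‖(B + ΔB) *ᵥ kron Δx Δx‖ ≤ matNorm (B + ΔB) * ‖kron Δx Δx‖ :=
            mulVec_norm_le' hn0 _ _
        _ ≤ bt * (r * r) := by
            rw [hbt]
            exact mul_le_mul_of_nonneg_left (kron_norm_le' _ _) (hbt ▸ hbt0)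
    have h4b : ‖ΔB *ᵥ (kron Δx xs + kron xs Δx)‖ ≤ δ * (2 * ‖xs‖ * r) := by
      calc ‖ΔB *ᵥ (kron Δx xs + kron xs Δx)‖
          ≤ matNorm ΔB * ‖kron Δx xs + kron xs Δx‖ := mulVec_norm_le' hn0 _ _
        _ ≤ δ * (2 * ‖xs‖ * r) := by
            rw [hδ]
            refine mul_le_mul_of_nonneg_left ?_ (hδ ▸ hδ0)
            calc ‖kron Δx xs + kron xs Δx‖
                ≤ ‖kron Δx xs‖ + ‖kron xs Δx‖ := norm_add_le _ _
              _ ≤ r * ‖xs‖ + ‖xs‖ * r := add_le_add (kron_norm_le' _ _) (kron_norm_le' _ _)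
              _ = 2 * ‖xs‖ * r := by ring
    have h4 : ‖φ Δx‖ ≤ bt * (r * r) + δ * (2 * ‖xs‖ * r) := by
      rw [hφ']
      exact (norm_add_le _ _).trans (add_le_add h4a h4b)
    have h2 : ‖ΔB *ᵥ (kron xs xs - kron e e) + φ Δx‖
        ≤ δ * d + (bt * (r * r) + δ * (2 * ‖xs‖ * r)) :=
      (norm_add_le _ _).trans (add_le_add h3 h4)
    have h1 : ‖μ Δx‖ ≤ ℓ * ‖ΔB *ᵥ (kron xs xs - kron e e) + φ Δx‖ := by
      rw [hμ, hℓ]; exact mulVec_norm_le' hn0 _ _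
    have h5 := mul_le_mul_of_nonneg_left h2 hℓ0
    calc ‖μ Δx‖ ≤ ℓ * (δ * d + (bt * (r * r) + δ * (2 * ‖xs‖ * r))) := h1.trans h5
      _ = ℓ * d * δ + 2 * ℓ * δ * ‖xs‖ * r + ℓ * bt * r ^ 2 := by ring
  refine ⟨main, fun ξ hξ0 hξeq Δx hΔxξ => ?_⟩
  have hr0 : (0:ℝ) ≤ ‖Δx‖ := norm_nonneg _
  have hsq : ‖Δx‖ ^ 2 ≤ ξ ^ 2 := pow_le_pow_left₀ hr0 hΔxξ 2
  have t1 : 2 * ℓ * δ * ‖xs‖ * ‖Δx‖ ≤ 2 * ℓ * δ * ‖xs‖ * ξ :=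
    mul_le_mul_of_nonneg_left hΔxξ (by positivity)
  have t2 : ℓ * bt * ‖Δx‖ ^ 2 ≤ ℓ * bt * ξ ^ 2 :=
    mul_le_mul_of_nonneg_left hsq (by positivity)
  have := main Δx
  linarith


end
end

section
/- Let a ∈ ℝ^n, B ∈ ℝ^{n×n²}, and x* ∈ ℝ^n satisfy x* = a + B(x* ⊗ x*) and e = a + B(e ⊗ e). Then B((e + x*) ⊗ I + I ⊗ (e + x*))·(e − x*) = 2(e − x*); that is, e − x* is an eigenvector of the n×n matrix B((e + x*) ⊗ I + I ⊗ (e + x*)) with eigenvalue 2. -/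
open Matrix

noncomputable section

lemma kron_mulVec {n : ℕ} (u w : Fin n → ℝ) :
    (kronVecId u + kronIdVec u) *ᵥ w = kron u w + kron w u := by
  funext p
  simp [Matrix.mulVec, dotProduct, kronVecId, kronIdVec, kron, mul_add,
    Finset.sum_add_distrib, mul_ite, mul_zero, mul_comm]

/-- if `x* = a + B(x*⊗x*)` and `e = a + B(e⊗e)`, then
`B((e + x*)⊗I + I⊗(e + x*))(e − x*) = 2(e − x*)`, i.e. `e − x*` satisfies the
eigenvalue-2 equation for the matrix `B((e + x*)⊗I + I⊗(e + x*))`. -/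
theorem stmt13 {n : ℕ} (hn : 1 ≤ n)
    (a : Fin n → ℝ) (B : Matrix (Fin n) (Fin (n * n)) ℝ)
    (xs : Fin n → ℝ)
    (e : Fin n → ℝ) (he : e = fun _ => (1 : ℝ))
    (hxs : xs = a + B *ᵥ kron xs xs)
    (heq : e = a + B *ᵥ kron e e) :
    (B * (kronVecId (e + xs) + kronIdVec (e + xs))) *ᵥ (e - xs)
      = (2 : ℝ) • (e - xs) := by
  have key : kron (e + xs) (e - xs) + kron (e - xs) (e + xs)
      = (2 : ℝ) • (kron e e - kron xs xs) := by
    funext p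
    simp only [kron, Pi.add_apply, Pi.sub_apply, Pi.smul_apply, smul_eq_mul]
    ring
  rw [← Matrix.mulVec_mulVec, kron_mulVec, key, Matrix.mulVec_smul,
    Matrix.mulVec_sub]
  have h1 : B *ᵥ kron e e = e - a := by
    conv_rhs => rw [heq]
    rw [add_sub_cancel_left]
  have h2 : B *ᵥ kron xs xs = xs - a := by
    conv_rhs => rw [hxs]
    rw [add_sub_cancel_left]
  rw [h1, h2]
  funext i
  simp only [Pi.smul_apply, Pi.sub_apply, smul_eq_mul]
  ring

end
end
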